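/- arXiv:1705.00530 — 3 statements merged into one kernel-verified Lean document; each statement's English description precedes it below -/
import Mathlib

section
/- Let S be a finite set, and for t ∈ [0,T] and probability-like vectors π ∈ ℝ^S, define H(t, π, u, p) = ∑_{B,C ∈ S} (p_C − p_B) (k^{B→C}(t) + ∑_{i ∈ I} k_i^{B→C}(t) u_i) π_B, where I is a finite index set, k^{B→C}, k_i^{B→C} : [0,T] → ℝ≥0, and u ranges over the box U = ∏_{i ∈ I} [−b_i, b_i] with b_i > 0. Assume (A2): for each i ∈ I there exist unique B_i, C_i ∈ S such that k_i^{B→C} is not identically zero only for (B,C) = (B_i, C_i). Then for every t, p, the function π ↦ max_{u ∈ U} H(t, π, u, p) restricted to π ∈ ℝ_{>0}^S equals ∑_{B,C} (p_C − p_B) k^{B→C}(t) π_B + ∑_{i ∈ I} b_i |(p_{C_i} − p_{B_i}) k_i^{B_i→C_i}(t)| π_{B_i}, and in particular is linear (hence concave) in π on ℝ_{>0}^S. -/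
theorem maximized_hamiltonian_linear
    (S : Type*) [Fintype S] [DecidableEq S]
    (I : Type*) [Fintype I]
    (T : ℝ) (hT : 0 ≤ T)
    (k : S → S → ℝ → ℝ) (ki : I → S → S → ℝ → ℝ)
    (hknonneg : ∀ B C, ∀ t ∈ Set.Icc 0 T, 0 ≤ k B C t)
    (hkinonneg : ∀ i B C, ∀ t ∈ Set.Icc 0 T, 0 ≤ ki i B C t)
    (b : I → ℝ) (hb : ∀ i, 0 < b i)
    (Bi Ci : I → S)
    -- (A2): ki i B C vanishes unless (B, C) = (Bi i, Ci i)
    (hA2 : ∀ i B C, (B ≠ Bi i ∨ C ≠ Ci i) → ∀ t, ki i B C t = 0)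
    (t : ℝ) (ht : t ∈ Set.Icc 0 T)
    (p : S → ℝ) (π : S → ℝ) (hπ : ∀ B, 0 < π B) :
    IsGreatest
      ((fun u : I → ℝ => ∑ B, ∑ C,
          (p C - p B) * (k B C t + ∑ i, ki i B C t * u i) * π B) ''
        {u | ∀ i, |u i| ≤ b i})
      ((∑ B, ∑ C, (p C - p B) * k B C t * π B)
        + ∑ i, b i * |(p (Ci i) - p (Bi i)) * ki i (Bi i) (Ci i) t| * π (Bi i)) := by
  set c : I → ℝ := fun i => (p (Ci i) - p (Bi i)) * ki i (Bi i) (Ci i) t * π (Bi i) with hc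
  have key : ∀ u : I → ℝ,
      (∑ B, ∑ C, (p C - p B) * (k B C t + ∑ i, ki i B C t * u i) * π B)
        = (∑ B, ∑ C, (p C - p B) * k B C t * π B) + ∑ i, c i * u i := by
    intro u
    have step : ∀ B C : S, (p C - p B) * (k B C t + ∑ i, ki i B C t * u i) * π B
        = (p C - p B) * k B C t * π B
          + ∑ i, (p C - p B) * (ki i B C t * u i) * π B := by
      intro B C
      rw [mul_add, add_mul, Finset.mul_sum, Finset.sum_mul]
    simp_rw [step, Finset.sum_add_distrib]
    congr 1
    have h2 : ∀ i : I, (∑ B, ∑ C, (p C - p B) * (ki i B C t * u i) * π B)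
        = c i * u i := by
      intro i
      rw [Finset.sum_eq_single (Bi i)]
      · rw [Finset.sum_eq_single (Ci i)]
        · simp [hc]; ring
        · intro C _ hC; rw [hA2 i _ _ (Or.inr hC)]; ring
        · intro h; exact absurd (Finset.mem_univ _) h
      · intro B _ hB
        apply Finset.sum_eq_zero; intro C _
        rw [hA2 i _ _ (Or.inl hB)]; ring
      · intro h; exact absurd (Finset.mem_univ _) h
    calc (∑ B, ∑ C, ∑ i, (p C - p B) * (ki i B C t * u i) * π B)
        = ∑ B, ∑ i, ∑ C, (p C - p B) * (ki i B C t * u i) * π B :=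
          Finset.sum_congr rfl fun B _ => Finset.sum_comm
      _ = ∑ i, ∑ B, ∑ C, (p C - p B) * (ki i B C t * u i) * π B := Finset.sum_comm
      _ = ∑ i, c i * u i := Finset.sum_congr rfl fun i _ => h2 i
  have habs : ∀ i : I, b i * |(p (Ci i) - p (Bi i)) * ki i (Bi i) (Ci i) t| * π (Bi i)
      = b i * |c i| := by
    intro i
    rw [hc]
    simp only [abs_mul, abs_of_pos (hπ (Bi i))]
    ring
  constructor
  · refine ⟨fun i => if 0 ≤ c i then b i else -(b i), ?_, ?_⟩
    · intro i
      by_cases h : 0 ≤ c i <;> simp [h, abs_of_pos (hb i), le_of_lt (hb i), abs_of_neg,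
        neg_neg, (hb i).le]
    · dsimp only
      rw [key]
      congr 1
      refine Finset.sum_congr rfl fun i _ => ?_
      rw [habs i]
      by_cases h : 0 ≤ c i
      · simp [h, abs_of_nonneg h]; ring
      · push_neg at h
        simp [not_le.mpr h, abs_of_neg h]; ring
  · rintro x ⟨u, hu, rfl⟩
    dsimp only
    rw [key]
    refine add_le_add le_rfl (Finset.sum_le_sum fun i _ => ?_)
    rw [habs i]
    calc c i * u i ≤ |c i * u i| := le_abs_self _
        _ = |c i| * |u i| := abs_mul _ _
        _ ≤ |c i| * b i := by
            exact mul_le_mul_of_nonneg_left (hu i) (abs_nonneg _)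
        _ = b i * |c i| := mul_comm _ _
end

section
/- Let S be a finite set, I a finite index set, and for each i ∈ I let k_i : [0,T] → ℝ be Lipschitz continuous with k_i(t) > 0 for all t whenever k_i is not identically zero, let B_i, C_i ∈ S, and let b_i > 0. Let k^{B→C} : [0,T] → ℝ be Lipschitz for all B, C ∈ S. Define u*_i(t, p) = b_i if (p_{C_i} − p_{B_i}) k_i(t) ≥ 0 and u*_i(t, p) = −b_i otherwise, and define the vector field P_B(t, p) = ∑_{C} (p_B − p_C) k^{B→C}(t) + ∑_{i: B_i = B} (p_B − p_{C_i}) k_i(t) u*_i(t, p). Then P is continuous on [0,T] × ℝ^S and locally Lipschitz on [0,T] × ℝ^S. -/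
open Set

/-- "Nice on s": Lipschitz with some constant and bounded. -/
def NiceOn {α : Type*} [PseudoMetricSpace α] (f : α → ℝ) (s : Set α) : Prop :=
  (∃ L : NNReal, LipschitzOnWith L f s) ∧ (∃ M : ℝ, ∀ x ∈ s, |f x| ≤ M)

namespace NiceOn

variable {α : Type*} [PseudoMetricSpace α] {f g : α → ℝ} {s : Set α}

lemma const (c : ℝ) : NiceOn (fun _ => c) s :=
  ⟨⟨0, (LipschitzWith.const c).lipschitzOnWith⟩, ⟨|c|, fun _ _ => le_rfl⟩⟩

lemma add (hf : NiceOn f s) (hg : NiceOn g s) : NiceOn (fun x => f x + g x) s := by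
  obtain ⟨⟨Lf, hLf⟩, ⟨Mf, hMf⟩⟩ := hf
  obtain ⟨⟨Lg, hLg⟩, ⟨Mg, hMg⟩⟩ := hg
  exact ⟨⟨Lf + Lg, hLf.add hLg⟩, ⟨Mf + Mg, fun x hx =>
    (abs_add_le _ _).trans (add_le_add (hMf x hx) (hMg x hx))⟩⟩

lemma sub (hf : NiceOn f s) (hg : NiceOn g s) : NiceOn (fun x => f x - g x) s := by
  obtain ⟨⟨Lf, hLf⟩, ⟨Mf, hMf⟩⟩ := hf
  obtain ⟨⟨Lg, hLg⟩, ⟨Mg, hMg⟩⟩ := hg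
  exact ⟨⟨Lf + Lg, hLf.sub hLg⟩, ⟨Mf + Mg, fun x hx =>
    (abs_sub _ _).trans (add_le_add (hMf x hx) (hMg x hx))⟩⟩

lemma mul (hf : NiceOn f s) (hg : NiceOn g s) : NiceOn (fun x => f x * g x) s := by
  obtain ⟨⟨Lf, hLf⟩, ⟨Mf, hMf⟩⟩ := hf
  obtain ⟨⟨Lg, hLg⟩, ⟨Mg, hMg⟩⟩ := hg
  constructor
  · refine ⟨Real.toNNReal (Mf * Lg + Mg * Lf), lipschitzOnWith_iff_dist_le_mul.mpr ?_⟩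
    intro x hx y hy
    have h1 : dist (f x) (f y) ≤ Lf * dist x y :=
      lipschitzOnWith_iff_dist_le_mul.mp hLf x hx y hy
    have h2 : dist (g x) (g y) ≤ Lg * dist x y :=
      lipschitzOnWith_iff_dist_le_mul.mp hLg x hx y hy
    have hfx := hMf x hx
    have hgy := hMg y hy
    have hMf0 : (0:ℝ) ≤ Mf := le_trans (abs_nonneg _) hfx
    have hMg0 : (0:ℝ) ≤ Mg := le_trans (abs_nonneg _) hgy
    have key : dist (f x * g x) (f y * g y) ≤ Mf * (Lg * dist x y) + Mg * (Lf * dist x y) := by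
      rw [Real.dist_eq] at *
      have e : f x * g x - f y * g y = f x * (g x - g y) + (f x - f y) * g y := by ring
      rw [e]
      calc |f x * (g x - g y) + (f x - f y) * g y|
          ≤ |f x * (g x - g y)| + |(f x - f y) * g y| := abs_add_le _ _
        _ = |f x| * |g x - g y| + |f x - f y| * |g y| := by rw [abs_mul, abs_mul]
        _ ≤ Mf * (Lg * dist x y) + Mg * (Lf * dist x y) := by
            have := abs_nonneg (g x - g y)
            have := abs_nonneg (f x - f y)
            nlinarith [abs_nonneg (f x), abs_nonneg (g y)]
    refine key.trans ?_
    have hc : Mf * Lg + Mg * Lf ≤ (Real.toNNReal (Mf * Lg + Mg * Lf) : ℝ) := by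
      rw [Real.coe_toNNReal']; exact le_max_left _ _
    nlinarith [dist_nonneg (x := x) (y := y)]
  · refine ⟨Mf * Mg, fun x hx => ?_⟩
    have hfx := hMf x hx
    have hgx := hMg x hx
    rw [abs_mul]
    exact mul_le_mul hfx hgx (abs_nonneg _) (le_trans (abs_nonneg _) hfx)

lemma abs (hf : NiceOn f s) : NiceOn (fun x => |f x|) s := by
  obtain ⟨⟨Lf, hLf⟩, ⟨Mf, hMf⟩⟩ := hf
  refine ⟨⟨Lf, fun x hx y hy => ?_⟩, ⟨Mf, fun x hx => (abs_abs (f x)) ▸ hMf x hx⟩⟩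
  calc edist |f x| |f y| ≤ edist (f x) (f y) := by
        rw [edist_dist, edist_dist, Real.dist_eq, Real.dist_eq]
        exact ENNReal.ofReal_le_ofReal (abs_abs_sub_abs_le_abs_sub _ _)
    _ ≤ Lf * edist x y := hLf hx hy

lemma sum {ι : Type*} (A : Finset ι) (F : ι → α → ℝ) (h : ∀ i ∈ A, NiceOn (F i) s) :
    NiceOn (fun x => ∑ i ∈ A, F i x) s := by
  classical
  induction A using Finset.cons_induction with
  | empty => simpa using NiceOn.const (s := s) 0
  | cons a A' ha ih =>
    simp only [Finset.sum_cons]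
    exact (h a (Finset.mem_cons_self _ _)).add
      (ih fun i hi => h i (Finset.mem_cons_of_mem hi))

lemma lip (hf : NiceOn f s) : ∃ L : NNReal, LipschitzOnWith L f s := hf.1

end NiceOn

lemma lip_pi {α S : Type*} [PseudoMetricSpace α] [Fintype S] {s : Set α} {f : α → S → ℝ}
    (h : ∀ B : S, ∃ L : NNReal, LipschitzOnWith L (fun x => f x B) s) :
    ∃ L : NNReal, LipschitzOnWith L f s := by
  classical
  choose L hL using h
  refine ⟨Finset.univ.sup L, fun x hx y hy => edist_pi_le_iff.mpr fun B => ?_⟩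
  exact le_trans (hL B hx hy)
    (mul_le_mul_left (ENNReal.coe_le_coe.mpr (Finset.le_sup (Finset.mem_univ B))) _)
theorem adjoint_vector_field_lipschitz
    (S : Type*) [Fintype S] [DecidableEq S]
    (I : Type*) [Fintype I]
    (T : ℝ) (hT : 0 ≤ T)
    (k : S → S → ℝ → ℝ)
    (hk : ∀ B C, ∃ L : NNReal, LipschitzOnWith L (k B C) (Set.Icc 0 T))
    (ki : I → ℝ → ℝ)
    (hki : ∀ i, ∃ L : NNReal, LipschitzOnWith L (ki i) (Set.Icc 0 T))
    (hkipos : ∀ i, (¬ ∀ t ∈ Set.Icc 0 T, ki i t = 0) →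
      ∀ t ∈ Set.Icc 0 T, 0 < ki i t)
    (Bi Ci : I → S)
    (b : I → ℝ) (hb : ∀ i, 0 < b i)
    (P : ℝ × (S → ℝ) → (S → ℝ))
    (hP : ∀ t (p : S → ℝ) (B : S), P (t, p) B =
      (∑ C, (p B - p C) * k B C t)
        + ∑ i ∈ Finset.univ.filter (fun i => Bi i = B),
            (p B - p (Ci i)) * ki i t *
              (if 0 ≤ (p (Ci i) - p (Bi i)) * ki i t then b i else -b i)) :
    ContinuousOn P (Set.Icc 0 T ×ˢ (Set.univ : Set (S → ℝ))) ∧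
    ∀ K : Set (ℝ × (S → ℝ)), Bornology.IsBounded K →
      K ⊆ Set.Icc 0 T ×ˢ (Set.univ : Set (S → ℝ)) →
      ∃ L : NNReal, LipschitzOnWith L P K := by
  classical
  -- Rewrite the bang-bang term using the absolute value.
  have hPeq : ∀ (x : ℝ × (S → ℝ)) (B : S), P x B =
      (∑ C, (x.2 B - x.2 C) * k B C x.1)
        - ∑ i ∈ Finset.univ.filter (fun i => Bi i = B),
            b i * |(x.2 B - x.2 (Ci i)) * ki i x.1| := by
    rintro ⟨t, p⟩ B
    rw [hP t p B, sub_eq_add_neg, ← Finset.sum_neg_distrib]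
    congr 1
    refine Finset.sum_congr rfl fun i hi => ?_
    have hBi : Bi i = B := (Finset.mem_filter.mp hi).2
    rw [hBi]
    have ha : (p (Ci i) - p B) * ki i t = -((p B - p (Ci i)) * ki i t) := by ring
    set a := (p B - p (Ci i)) * ki i t with hadef
    rw [ha]
    split_ifs with h
    · have ha0 : a ≤ 0 := by linarith
      rw [abs_of_nonpos ha0]; ring
    · have ha0 : 0 < a := by push_neg at h; linarith
      rw [abs_of_pos ha0]; ring
  -- Main Lipschitz claim on bounded sets.
  have main : ∀ K : Set (ℝ × (S → ℝ)), Bornology.IsBounded K →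
      K ⊆ Set.Icc 0 T ×ˢ (Set.univ : Set (S → ℝ)) →
      ∃ L : NNReal, LipschitzOnWith L P K := by
    intro K hKb hKs
    obtain ⟨R, hR⟩ := isBounded_iff_forall_norm_le.mp hKb
    have hfst : ∀ x ∈ K, x.1 ∈ Set.Icc 0 T := fun x hx => (hKs hx).1
    -- coordinates are nice
    have coordNice : ∀ B : S, NiceOn (fun x : ℝ × (S → ℝ) => x.2 B) K := by
      intro B
      constructor
      · exact ⟨1 * 1, ((LipschitzWith.eval B).comp LipschitzWith.prod_snd).lipschitzOnWith⟩
      · refine ⟨R, fun x hx => ?_⟩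
        calc |x.2 B| = ‖x.2 B‖ := rfl
          _ ≤ ‖x.2‖ := norm_le_pi_norm _ B
          _ ≤ ‖x‖ := norm_snd_le x
          _ ≤ R := hR x hx
    -- time functions composed with fst are nice
    have timeNice : ∀ (f : ℝ → ℝ), (∃ L : NNReal, LipschitzOnWith L f (Set.Icc 0 T)) →
        NiceOn (fun x : ℝ × (S → ℝ) => f x.1) K := by
      intro f ⟨L, hL⟩
      constructor
      · refine ⟨L * 1, ?_⟩
        exact hL.comp (LipschitzWith.prod_fst.lipschitzOnWith) hfst
      · refine ⟨|f 0| + L * T, fun x hx => ?_⟩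
        have h0 : (0:ℝ) ∈ Set.Icc 0 T := ⟨le_refl 0, hT⟩
        have hd : dist (f x.1) (f 0) ≤ L * dist x.1 0 :=
          lipschitzOnWith_iff_dist_le_mul.mp hL x.1 (hfst x hx) 0 h0
        have hx1 := hfst x hx
        have hdist : dist x.1 0 ≤ T := by
          rw [Real.dist_eq, sub_zero, abs_of_nonneg hx1.1]; exact hx1.2
        have : |f x.1 - f 0| ≤ L * T := by
          rw [Real.dist_eq] at hd
          calc |f x.1 - f 0| ≤ L * dist x.1 0 := hd
            _ ≤ L * T := by
                have : (0:ℝ) ≤ L := L.coe_nonneg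
                nlinarith
        calc |f x.1| = |f 0 + (f x.1 - f 0)| := by ring_nf
          _ ≤ |f 0| + |f x.1 - f 0| := abs_add_le _ _
          _ ≤ |f 0| + L * T := by linarith
    -- each component of P is nice
    have compNice : ∀ B : S, NiceOn (fun x : ℝ × (S → ℝ) => P x B) K := by
      intro B
      have heq : (fun x : ℝ × (S → ℝ) => P x B) = fun x =>
          (∑ C, (x.2 B - x.2 C) * k B C x.1)
            - ∑ i ∈ Finset.univ.filter (fun i => Bi i = B),
                b i * |(x.2 B - x.2 (Ci i)) * ki i x.1| := funext fun x => hPeq x B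
      rw [heq]
      refine NiceOn.sub ?_ ?_
      · exact NiceOn.sum _ _ fun C _ =>
          ((coordNice B).sub (coordNice C)).mul (timeNice _ (hk B C))
      · exact NiceOn.sum _ _ fun i _ =>
          (NiceOn.const (b i)).mul
            (((coordNice B).sub (coordNice (Ci i))).mul (timeNice _ (hki i))).abs
    exact lip_pi fun B => (compNice B).lip
  refine ⟨?_, main⟩
  -- Continuity from local Lipschitz bounds.
  intro x hx
  set K := (Set.Icc 0 T ×ˢ (Set.univ : Set (S → ℝ))) ∩ Metric.closedBall x 1 with hK
  have hKb : Bornology.IsBounded K :=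
    (Metric.isBounded_closedBall).subset Set.inter_subset_right
  obtain ⟨L, hL⟩ := main K hKb Set.inter_subset_left
  have hx' : x ∈ K := ⟨hx, Metric.mem_closedBall_self (by norm_num)⟩
  have hc : ContinuousWithinAt P K x := hL.continuousOn x hx'
  exact (continuousWithinAt_inter (Metric.closedBall_mem_nhds x one_pos)).mp hc
end

section
/- Let h : [0,T] × ℝ^S × U → ℝ^S be continuous, linear in π and affine in u, where S is a finite set and U = ∏_{i∈I}[−b_i, b_i]. Let π, π* : [0,t̂] → ℝ^S be solutions of π̇(t) = h(t, π(t), u(t)) and π̇*(t) = h(t, π*(t), u*(t)) with π(0) = π*(0), where u, u* : [0,t̂] → U are measurable. Let p : [0,t̂] → ℝ^S be absolutely continuous and satisfy ṗ(t) = −(∂_π h)(t, π*(t), u*(t))ᵀ p(t). Then ⟨p(t̂), π(t̂) − π*(t̂)⟩ = ∫_0^{t̂} ⟨p(t), h(t, π(t), u(t)) − h(t, π(t), u*(t))⟩ dt. -/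
/-!
Along the interval, `d/dt ⟨p, π - π*⟩ = ⟨ṗ, π - π*⟩ + ⟨p, h(π, u) - h(π*, u*)⟩`. Since
`h(t, ·, u*)` is linear, the adjoint equation turns the first term into
`-⟨p, h(π, u*) - h(π*, u*)⟩`, so the derivative is `⟨p, h(π, u) - h(π, u*)⟩`. This integrand is
measurable and bounded (`h` is continuous on the compact set `[0, t̂] × π([0, t̂]) × U`), so the
fundamental theorem of calculus applies, and the boundary term at `0` vanishes as `π(0) = π*(0)`.
-/

open Matrix MeasureTheory Set

theorem dotProduct_linearMap_eq_transpose_dotProduct {R m n : Type*} [CommSemiring R]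
    [Fintype m] [Fintype n] [DecidableEq n] (L : (n → R) →ₗ[R] m → R) (p : m → R) (v : n → R) :
    p ⬝ᵥ L v = (fun j => ∑ i, p i * L (Pi.single j 1) i) ⬝ᵥ v := by
  rw [← LinearMap.toMatrix'_mulVec L v, dotProduct_mulVec]
  rfl

theorem HasDerivAt.dotProduct {𝕜 ι : Type*} [NontriviallyNormedField 𝕜] [Fintype ι]
    {f g : 𝕜 → ι → 𝕜} {f' g' : ι → 𝕜} {t : 𝕜}
    (hf : HasDerivAt f f' t) (hg : HasDerivAt g g' t) :
    HasDerivAt (fun s => f s ⬝ᵥ g s) (f' ⬝ᵥ g t + f t ⬝ᵥ g') t := by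
  have := HasDerivAt.fun_sum (u := Finset.univ) fun i _ =>
    (hasDerivAt_pi.1 hf i).fun_mul (hasDerivAt_pi.1 hg i)
  rw [Finset.sum_add_distrib] at this
  exact this

theorem HasDerivAt.dotProduct_sub_of_adjoint {S : Type*} [Fintype S] [DecidableEq S]
    {L : (S → ℝ) →ₗ[ℝ] S → ℝ} {p π πstar : ℝ → S → ℝ} {a : S → ℝ} {t : ℝ}
    (hp : HasDerivAt p (-fun B => ∑ C, p t C * L (Pi.single B 1) C) t)
    (hπ : HasDerivAt π a t) (hπstar : HasDerivAt πstar (L (πstar t)) t) :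
    HasDerivAt (fun s => p s ⬝ᵥ (π s - πstar s)) (p t ⬝ᵥ (a - L (π t))) t := by
  refine (hp.dotProduct (hπ.sub hπstar)).congr_deriv ?_
  rw [neg_dotProduct, Pi.sub_apply, ← dotProduct_linearMap_eq_transpose_dotProduct, map_sub]
  simp only [dotProduct_sub]
  ring

theorem integrableOn_Icc_comp_of_isCompact {X Y E : Type*} [TopologicalSpace X]
    [TopologicalSpace.PseudoMetrizableSpace X] [TopologicalSpace Y] [NormedAddCommGroup E]
    {H : ℝ × X × Y → E} (hH : Continuous H) {a b : ℝ} {x : ℝ → X}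
    (hx : ContinuousOn x (Icc a b)) {w : ℝ → Y}
    (hw : AEStronglyMeasurable w (volume.restrict (Icc a b)))
    {K : Set Y} (hK : IsCompact K) (hwK : ∀ t ∈ Icc a b, w t ∈ K) :
    IntegrableOn (fun t => H (t, x t, w t)) (Icc a b) := by
  obtain ⟨C, hC⟩ := (isCompact_Icc.prod ((isCompact_Icc.image_of_continuousOn hx).prod hK)
    ).exists_bound_of_continuousOn hH.continuousOn
  refine IntegrableOn.of_bound measure_Icc_lt_top ?_ C ?_
  · exact hH.comp_aestronglyMeasurable
      (aestronglyMeasurable_id.prodMk ((hx.aestronglyMeasurable measurableSet_Icc).prodMk hw))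
  · exact (ae_restrict_iff' measurableSet_Icc).2 <| ae_of_all _ fun t ht =>
      hC _ ⟨ht, mem_image_of_mem x ht, hwK t ht⟩

theorem MeasureTheory.IntegrableOn.dotProduct_of_continuousOn {X R ι : Type*}
    [MeasurableSpace X] [TopologicalSpace X] [OpensMeasurableSpace X] [T2Space X]
    {μ : Measure X} [NormedRing R] [SecondCountableTopologyEither X R] [Fintype ι] {K : Set X}
    {p v : X → ι → R} (hp : ContinuousOn p K) (hv : IntegrableOn v K μ) (hK : IsCompact K) :
    IntegrableOn (fun x => p x ⬝ᵥ v x) K μ :=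
  integrable_finsetSum _ fun i _ =>
    IntegrableOn.continuousOn_mul ((continuous_apply i).comp_continuousOn hp) (hv.eval i) hK

theorem adjoint_integration_by_parts_general
    (S : Type*) [Fintype S] [DecidableEq S]
    (I : Type*) [Fintype I]
    (that : ℝ) (hthat : 0 ≤ that)
    (b : I → ℝ)
    (h : ℝ → (S → ℝ) → (I → ℝ) → (S → ℝ))
    (hcont : Continuous (fun x : ℝ × (S → ℝ) × (I → ℝ) => h x.1 x.2.1 x.2.2))
    -- h is linear in π
    (hlin : ∀ t (u : I → ℝ), IsLinearMap ℝ (fun π : S → ℝ => h t π u))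
    (u ustar : ℝ → I → ℝ)
    (humeas : Measurable u) (hustarmeas : Measurable ustar)
    (hubox : ∀ t i, |u t i| ≤ b i) (hustarbox : ∀ t i, |ustar t i| ≤ b i)
    (π πstar : ℝ → S → ℝ)
    (hπode : ∀ B, ∀ t ∈ Set.Icc 0 that,
      HasDerivAt (fun s => π s B) (h t (π t) (u t) B) t)
    (hπstarode : ∀ B, ∀ t ∈ Set.Icc 0 that,
      HasDerivAt (fun s => πstar s B) (h t (πstar t) (ustar t) B) t)
    (hinit : π 0 = πstar 0)
    (p : ℝ → S → ℝ)
    -- adjoint equation: ṗ = −(∂_π h)(t, π*, u*)ᵀ p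
    (hpode : ∀ B, ∀ t ∈ Set.Icc 0 that,
      HasDerivAt (fun s => p s B)
        (-(∑ C, p t C * h t (Pi.single B (1 : ℝ)) (ustar t) C)) t) :
    ∑ B, p that B * (π that B - πstar that B)
      = ∫ t in (0 : ℝ)..that,
          ∑ B, p t B * (h t (π t) (u t) B - h t (π t) (ustar t) B) := by
  have hπ t (ht : t ∈ Icc 0 that) : HasDerivAt π (h t (π t) (u t)) t :=
    hasDerivAt_pi.2 fun B => hπode B t ht
  have hp t (ht : t ∈ Icc 0 that) : HasDerivAt p _ t := hasDerivAt_pi.2 fun B => hpode B t ht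
  have hderiv : ∀ t ∈ uIcc 0 that, HasDerivAt (fun s => p s ⬝ᵥ (π s - πstar s))
      (p t ⬝ᵥ (h t (π t) (u t) - h t (π t) (ustar t))) t := by
    intro t ht
    rw [uIcc_of_le hthat] at ht
    exact HasDerivAt.dotProduct_sub_of_adjoint (L := IsLinearMap.mk' _ (hlin t (ustar t)))
      (hp t ht) (hπ t ht) (hasDerivAt_pi.2 fun B => hπstarode B t ht)
  have hπcont : ContinuousOn π (Icc 0 that) := fun t ht =>
    (hπ t ht).continuousAt.continuousWithinAt
  have hpcont : ContinuousOn p (Icc 0 that) := fun t ht =>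
    (hp t ht).continuousAt.continuousWithinAt
  have hbox : IsCompact (univ.pi fun i => Icc (-b i) (b i)) :=
    isCompact_univ_pi fun i => isCompact_Icc
  have hh_integrable {w : ℝ → I → ℝ} (hw : Measurable w) (hwb : ∀ t i, |w t i| ≤ b i) :
      IntegrableOn (fun t => h t (π t) (w t)) (Icc 0 that) :=
    integrableOn_Icc_comp_of_isCompact hcont hπcont hw.aestronglyMeasurable hbox
      fun t _ i _ => abs_le.1 (hwb t i)
  have hint : IntervalIntegrable
      (fun t => p t ⬝ᵥ (h t (π t) (u t) - h t (π t) (ustar t))) volume 0 that := by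
    rw [intervalIntegrable_iff_integrableOn_Icc_of_le hthat]
    exact ((hh_integrable humeas hubox).sub (hh_integrable hustarmeas hustarbox)).dotProduct_of_continuousOn
      hpcont isCompact_Icc
  have hFTC := intervalIntegral.integral_eq_sub_of_hasDerivAt hderiv hint
  simp only [hinit, sub_self, dotProduct_zero, sub_zero] at hFTC
  -- `⬝ᵥ` unfolds definitionally to the coordinate sums of the statement
  exact hFTC.symm

theorem adjoint_integration_by_parts
    (S : Type*) [Fintype S] [DecidableEq S]
    (I : Type*) [Fintype I]
    (that : ℝ) (hthat : 0 ≤ that)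
    (b : I → ℝ) (hb : ∀ i, 0 < b i)
    (h : ℝ → (S → ℝ) → (I → ℝ) → (S → ℝ))
    (hcont : Continuous (fun x : ℝ × (S → ℝ) × (I → ℝ) => h x.1 x.2.1 x.2.2))
    -- h is linear in π
    (hlin : ∀ t (u : I → ℝ), IsLinearMap ℝ (fun π : S → ℝ => h t π u))
    (u ustar : ℝ → I → ℝ)
    (humeas : Measurable u) (hustarmeas : Measurable ustar)
    (hubox : ∀ t i, |u t i| ≤ b i) (hustarbox : ∀ t i, |ustar t i| ≤ b i)
    (π πstar : ℝ → S → ℝ)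
    (hπode : ∀ B, ∀ t ∈ Set.Icc 0 that,
      HasDerivAt (fun s => π s B) (h t (π t) (u t) B) t)
    (hπstarode : ∀ B, ∀ t ∈ Set.Icc 0 that,
      HasDerivAt (fun s => πstar s B) (h t (πstar t) (ustar t) B) t)
    (hinit : π 0 = πstar 0)
    (p : ℝ → S → ℝ)
    -- adjoint equation: ṗ = −(∂_π h)(t, π*, u*)ᵀ p
    (hpode : ∀ B, ∀ t ∈ Set.Icc 0 that,
      HasDerivAt (fun s => p s B)
        (-(∑ C, p t C * h t (Pi.single B (1 : ℝ)) (ustar t) C)) t) :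
    ∑ B, p that B * (π that B - πstar that B)
      = ∫ t in (0 : ℝ)..that,
          ∑ B, p t B * (h t (π t) (u t) B - h t (π t) (ustar t) B) :=
  adjoint_integration_by_parts_general S I that hthat b h hcont hlin u ustar humeas hustarmeas hubox
    hustarbox π πstar hπode hπstarode hinit p hpode
end
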